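/- Let N = (P, T, Pre, Post) be a Petri net, M_0 ∈ ℕ^P a marking, and let S = b + 𝐏 ⊆ ℕ^P be a linear set, where b ∈ ℕ^P and 𝐏 = {λ_1·v_1 + ... + λ_k·v_k | λ_1, ..., λ_k ∈ ℕ} for given vectors v_1, ..., v_k ∈ ℕ^P. Let N' be the Petri net constructed from N, b and v_1, ..., v_k as described. Then Reach(M_0) ∩ S = ∅ in N if and only if the zero marking 0 does not belong to Reach(M_0') in N', where M_0' is the marking with M_0'(p_sim) = 1, M_0'(p_lin) = 0 and M_0'(p) = M_0(p) for all p ∈ P. -/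

import Mathlib

/-- A Petri net with (finite) sets `P` of places and `T` of transitions:
pre- and post-condition functions assigning to each transition a multiset of places,
represented as a function `P → ℕ`. -/
structure PetriNet (P T : Type) : Type where
  Pre : T → P → ℕ
  Post : T → P → ℕ

namespace PetriNet

variable {P T : Type}

/-- The firing relation: `M ⇒ M'` iff some transition `t` satisfies `Pre t ≤ M`
and `M' = M - Pre t + Post t` (pointwise). -/
def Fire (N : PetriNet P T) (M M' : P → ℕ) : Prop :=
  ∃ t : T, N.Pre t ≤ M ∧ M' = M - N.Pre t + N.Post t

/-- Reachability: reflexive-transitive closure of the firing relation. -/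
def Reach (N : PetriNet P T) : (P → ℕ) → (P → ℕ) → Prop := Relation.ReflTransGen N.Fire

/-- The extended places: the places of the original net, plus two fresh places
`p_sim = Sum.inr false` and `p_lin = Sum.inr true`. -/
abbrev ExtPlace (P : Type) : Type := P ⊕ Bool

/-- The extended transitions: the transitions of the original net, plus `k` transitions
`t_cons_i = Sum.inr (Sum.inl i)`, the transition `t_lin = Sum.inr (Sum.inr false)` and the
transition `t_end = Sum.inr (Sum.inr true)`. -/
abbrev ExtTrans (T : Type) (k : ℕ) : Type := T ⊕ (Fin k ⊕ Bool)

/-- The Petri net `N'` built from `N`, a base vector `b` and period vectors `v 1, …, v k`: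
while a token lies in `p_sim`, `N'` simulates `N`; the transition `t_lin` consumes the token
of `p_sim` together with `b(p)` tokens in each place `p ∈ P` and produces a token in `p_lin`;
each `t_cons_i` tests the token in `p_lin` and consumes `v i (p)` tokens in each `p ∈ P`;
finally `t_end` consumes the token of `p_lin`. -/
def extNet (N : PetriNet P T) {k : ℕ} (b : P → ℕ) (v : Fin k → P → ℕ) :
    PetriNet (ExtPlace P) (ExtTrans T k) where
  Pre
    | Sum.inl t => fun p =>
        match p with
        | Sum.inl p => N.Pre t p
        | Sum.inr false => 1
        | Sum.inr true => 0
    | Sum.inr (Sum.inl i) => fun p =>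
        match p with
        | Sum.inl p => v i p
        | Sum.inr false => 0
        | Sum.inr true => 1
    | Sum.inr (Sum.inr false) => fun p =>
        match p with
        | Sum.inl p => b p
        | Sum.inr false => 1
        | Sum.inr true => 0
    | Sum.inr (Sum.inr true) => fun p =>
        match p with
        | Sum.inl _ => 0
        | Sum.inr false => 0
        | Sum.inr true => 1
  Post
    | Sum.inl t => fun p =>
        match p with
        | Sum.inl p => N.Post t p
        | Sum.inr false => 1
        | Sum.inr true => 0
    | Sum.inr (Sum.inl _) => fun p =>
        match p with
        | Sum.inl _ => 0
        | Sum.inr false => 0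
        | Sum.inr true => 1
    | Sum.inr (Sum.inr false) => fun p =>
        match p with
        | Sum.inl _ => 0
        | Sum.inr false => 0
        | Sum.inr true => 1
    | Sum.inr (Sum.inr true) => fun _ => 0

/-- The initial marking of `N'`: one token in `p_sim`, none in `p_lin`, and `M₀` on `P`. -/
def extM0 (M0 : P → ℕ) : ExtPlace P → ℕ
  | Sum.inl p => M0 p
  | Sum.inr false => 1
  | Sum.inr true => 0

end PetriNet

/-!
A run of `N'` from `M₀'` to `0` has a rigid shape: it simulates `N` from `M₀` to some `M`,
fires `t_lin` once, which removes `b` and moves the control token to `p_lin`, fires the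
`t_cons_i` some `λ_i` times and finally `t_end`. It leaves no token behind exactly when the
`t_cons_i` consume `M - b` completely, i.e. when `M = b + ∑ λ_i • v_i`; conversely every
reachable `M` of this form yields such a run.
-/

namespace PetriNet

variable {P T : Type} {k : ℕ}

def linMarking (w : P → ℕ) : ExtPlace P → ℕ
  | Sum.inl p => w p
  | Sum.inr false => 0
  | Sum.inr true => 1

def deadMarking (w : P → ℕ) : ExtPlace P → ℕ
  | Sum.inl p => w p
  | Sum.inr _ => 0

lemma deadMarking_zero : deadMarking (0 : P → ℕ) = fun _ => 0 := by
  funext x; rcases x with p | _ <;> rfl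

variable (N : PetriNet P T) (b : P → ℕ) (v : Fin k → P → ℕ)

lemma fire_extM0_extM0 {M : P → ℕ} {t : T} (h : N.Pre t ≤ M) :
    (N.extNet b v).Fire (extM0 M) (extM0 (M - N.Pre t + N.Post t)) := by
  refine ⟨Sum.inl t, ?_, ?_⟩
  · rintro (p | _ | _)
    exacts [h p, le_rfl, le_rfl]
  · funext x; rcases x with p | _ | _ <;> simp [extNet, extM0]

lemma fire_extM0_linMarking {M : P → ℕ} (h : b ≤ M) :
    (N.extNet b v).Fire (extM0 M) (linMarking (M - b)) := by
  refine ⟨Sum.inr (Sum.inr false), ?_, ?_⟩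
  · rintro (p | _ | _)
    exacts [h p, le_rfl, le_rfl]
  · funext x; rcases x with p | _ | _ <;> simp [extNet, extM0, linMarking]

lemma fire_linMarking_linMarking (i : Fin k) (w : P → ℕ) :
    (N.extNet b v).Fire (linMarking (v i + w)) (linMarking w) := by
  refine ⟨Sum.inr (Sum.inl i), ?_, ?_⟩
  · rintro (p | _ | _) <;> simp [extNet, linMarking]
  · funext x; rcases x with p | _ | _ <;> simp [extNet, linMarking]

lemma fire_linMarking_deadMarking (w : P → ℕ) :
    (N.extNet b v).Fire (linMarking w) (deadMarking w) := by
  refine ⟨Sum.inr (Sum.inr true), ?_, ?_⟩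
  · rintro (p | _ | _) <;> simp [extNet, linMarking]
  · funext x; rcases x with p | _ | _ <;> simp [extNet, linMarking, deadMarking]

lemma fire_extM0_cases {M : P → ℕ} {M' : ExtPlace P → ℕ}
    (h : (N.extNet b v).Fire (extM0 M) M') :
    (∃ t, N.Pre t ≤ M ∧ M' = extM0 (M - N.Pre t + N.Post t)) ∨
      (b ≤ M ∧ M' = linMarking (M - b)) := by
  obtain ⟨t' | i | _ | _, hle, rfl⟩ := h
  · refine .inl ⟨t', fun p => hle (Sum.inl p), ?_⟩
    funext x; rcases x with p | _ | _ <;> simp [extNet, extM0]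
  · simpa [extNet, extM0] using hle (Sum.inr true)
  · refine .inr ⟨fun p => hle (Sum.inl p), ?_⟩
    funext x; rcases x with p | _ | _ <;> simp [extNet, extM0, linMarking]
  · simpa [extNet, extM0] using hle (Sum.inr true)

lemma fire_linMarking_cases {w : P → ℕ} {M' : ExtPlace P → ℕ}
    (h : (N.extNet b v).Fire (linMarking w) M') :
    (∃ i, v i ≤ w ∧ M' = linMarking (w - v i)) ∨ M' = deadMarking w := by
  obtain ⟨_ | i | _ | _, hle, rfl⟩ := h
  · simpa [extNet, linMarking] using hle (Sum.inr false)
  · refine .inl ⟨i, fun p => hle (Sum.inl p), ?_⟩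
    funext x; rcases x with p | _ | _ <;> simp [extNet, linMarking]
  · simpa [extNet, linMarking] using hle (Sum.inr false)
  · refine .inr ?_
    funext x; rcases x with p | _ | _ <;> simp [extNet, linMarking, deadMarking]

lemma not_fire_deadMarking (w : P → ℕ) (M' : ExtPlace P → ℕ) :
    ¬ (N.extNet b v).Fire (deadMarking w) M' := by
  rintro ⟨_ | _ | _ | _, hle, -⟩ <;>
    first
    | simpa [extNet, deadMarking] using hle (Sum.inr false)
    | simpa [extNet, deadMarking] using hle (Sum.inr true)

lemma reach_extM0_extM0 {M M' : P → ℕ} (h : N.Reach M M') :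
    (N.extNet b v).Reach (extM0 M) (extM0 M') := by
  induction h with
  | refl => exact .refl
  | tail _ hstep ih =>
    obtain ⟨t, hle, rfl⟩ := hstep
    exact ih.tail (fire_extM0_extM0 N b v hle)

lemma reach_linMarking_nsmul (i : Fin k) (n : ℕ) (w : P → ℕ) :
    (N.extNet b v).Reach (linMarking (n • v i + w)) (linMarking w) := by
  induction n with
  | zero => simpa using .refl
  | succ n ih =>
    rw [succ_nsmul', add_assoc]
    exact .head (fire_linMarking_linMarking N b v i _) ih

lemma reach_linMarking_sum (lam : Fin k → ℕ) (s : Finset (Fin k)) (w : P → ℕ) :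
    (N.extNet b v).Reach (linMarking (∑ i ∈ s, lam i • v i + w)) (linMarking w) := by
  induction s using Finset.induction_on generalizing w with
  | empty => simpa using .refl
  | insert i s hi ih =>
    rw [Finset.sum_insert hi, add_assoc]
    exact (reach_linMarking_nsmul N b v i (lam i) _).trans (ih w)

lemma eq_zero_of_reach_deadMarking_zero {w : P → ℕ}
    (h : (N.extNet b v).Reach (deadMarking w) fun _ => 0) : w = 0 := by
  rcases Relation.ReflTransGen.cases_head h with hw | ⟨_, hstep, -⟩
  · funext p; exact congrFun hw (Sum.inl p)
  · exact absurd hstep (not_fire_deadMarking N b v w _)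

lemma exists_sum_eq_of_reach_linMarking_zero {w : P → ℕ}
    (h : (N.extNet b v).Reach (linMarking w) fun _ => 0) :
    ∃ lam : Fin k → ℕ, w = ∑ i, lam i • v i := by
  generalize hM : linMarking w = M at h
  induction h using Relation.ReflTransGen.head_induction_on generalizing w with
  | refl => simpa [linMarking] using congrFun hM (Sum.inr true)
  | head hstep hrest ih =>
    subst hM
    rcases fire_linMarking_cases N b v hstep with ⟨i, hle, rfl⟩ | rfl
    · obtain ⟨lam, hlam⟩ := ih rfl
      refine ⟨lam + Pi.single i 1, ?_⟩
      simp only [Pi.add_apply, add_smul, Finset.sum_add_distrib, Pi.single_apply, ite_smul,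
        one_smul, zero_smul, Finset.sum_ite_eq', Finset.mem_univ, if_true, ← hlam]
      exact (tsub_add_cancel_of_le hle).symm
    · exact ⟨0, by simpa using eq_zero_of_reach_deadMarking_zero N b v hrest⟩

lemma exists_reach_linear_of_reach_extM0_zero {M : P → ℕ}
    (h : (N.extNet b v).Reach (extM0 M) fun _ => 0) :
    ∃ M', N.Reach M M' ∧ ∃ lam : Fin k → ℕ, M' = b + ∑ i, lam i • v i := by
  generalize hM : extM0 M = M₁ at h
  induction h using Relation.ReflTransGen.head_induction_on generalizing M with
  | refl => simpa [extM0] using congrFun hM (Sum.inr false)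
  | head hstep hrest ih =>
    subst hM
    rcases fire_extM0_cases N b v hstep with ⟨t, hle, rfl⟩ | ⟨hle, rfl⟩
    · obtain ⟨M', hreach, hM'⟩ := ih rfl
      exact ⟨M', .head ⟨t, hle, rfl⟩ hreach, hM'⟩
    · obtain ⟨lam, hlam⟩ := exists_sum_eq_of_reach_linMarking_zero N b v hrest
      exact ⟨M, .refl, lam, by rw [← hlam, add_tsub_cancel_of_le hle]⟩

lemma reach_extM0_zero_iff (M : P → ℕ) :
    (N.extNet b v).Reach (extM0 M) (fun _ => 0) ↔
      ∃ M', N.Reach M M' ∧ ∃ lam : Fin k → ℕ, M' = b + ∑ i, lam i • v i := by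
  refine ⟨exists_reach_linear_of_reach_extM0_zero N b v, ?_⟩
  rintro ⟨_, hreach, lam, rfl⟩
  have hlin := fire_extM0_linMarking N b v (le_self_add : b ≤ b + ∑ i, lam i • v i)
  have hsum := reach_linMarking_sum N b v lam Finset.univ 0
  have hend := fire_linMarking_deadMarking N b v 0
  rw [add_tsub_cancel_left] at hlin
  rw [add_zero] at hsum
  rw [deadMarking_zero] at hend
  exact (((reach_extM0_extM0 N b v hreach).tail hlin).trans hsum).tail hend

end PetriNet

open PetriNet in
theorem petri_reach_inter_linear_empty_iff_general {P T : Type}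
    (N : PetriNet P T) (M0 : P → ℕ) {k : ℕ} (b : P → ℕ) (v : Fin k → P → ℕ) :
    {M : P → ℕ | N.Reach M0 M} ∩
        {M : P → ℕ | ∃ lam : Fin k → ℕ, M = b + ∑ i : Fin k, lam i • v i} = ∅ ↔
      ¬ (N.extNet b v).Reach (extM0 M0) (fun _ => 0) := by
  rw [reach_extM0_zero_iff, Set.eq_empty_iff_forall_notMem]
  simp only [Set.mem_inter_iff, Set.mem_ofPred_eq, not_exists, not_and]

open PetriNet in
/-- For a Petri net `N`, a marking `M₀` and a linear set
`S = b + {λ₁·v₁ + … + λ_k·v_k}`, the reachability set of `M₀` in `N` is disjoint from `S`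
iff the zero marking is not reachable from `M₀'` in the extended net `N'`. -/
theorem petri_reach_inter_linear_empty_iff {P T : Type} [Fintype P] [Fintype T]
    (N : PetriNet P T) (M0 : P → ℕ) {k : ℕ} (b : P → ℕ) (v : Fin k → P → ℕ) :
    {M : P → ℕ | N.Reach M0 M} ∩
        {M : P → ℕ | ∃ lam : Fin k → ℕ, M = b + ∑ i : Fin k, lam i • v i} = ∅ ↔
      ¬ (N.extNet b v).Reach (extM0 M0) (fun _ => 0) :=
  petri_reach_inter_linear_empty_iff_general N M0 b v
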